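/- Let n ≥ 2 and m ≤ n+1 be positive integers, and suppose f is a vertex of K_m^{M(M(K_n))} such that for some p, q ∈ {0,1} and distinct i0, i1 ∈ [n], f(i0, p, q) = f(i1, p, q). Then there exists a vertex f̃ of K_m^{M(M(K_n))} agreeing with f except that f̃(j, p, q) = f(i0, p, q) for all j ∈ [n], such that the neighborhood of f is contained in the neighborhood of f̃. -/

import Mathlib

/-- A finite graph in the sense of the paper: a symmetric adjacency relation,
loops are allowed. -/
structure Graph' (V : Type) where
  Adj : V → V → Prop
  symm : ∀ {u v}, Adj u v → Adj v u

namespace Graph'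

variable {α β : Type}

/-- The complete graph `K_m` on vertex set `Fin m`. -/
def completeG (m : ℕ) : Graph' (Fin m) :=
  ⟨fun i j => i ≠ j, fun h => h.symm⟩

/-- `f` is a graph homomorphism from `G` to `H`. -/
def IsHom (G : Graph' α) (H : Graph' β) (f : α → β) : Prop :=
  ∀ ⦃u v⦄, G.Adj u v → H.Adj (f u) (f v)

/-- `G` admits a proper coloring with `n` colors. -/
def Colorable (G : Graph' α) (n : ℕ) : Prop :=
  ∃ f : α → Fin n, G.IsHom (completeG n) f

/-- The chromatic number of `G`, as an extended natural number. -/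
noncomputable def chromNum (G : Graph' α) : ℕ∞ :=
  sInf ((fun k : ℕ => (k : ℕ∞)) '' {k | G.Colorable k})

/-- The neighborhood of a vertex. -/
def neighborSet (G : Graph' α) (v : α) : Set α := {w | G.Adj v w}

/-- The categorical product `G × H`. -/
def tensor (G : Graph' α) (H : Graph' β) : Graph' (α × β) :=
  ⟨fun p q => G.Adj p.1 q.1 ∧ H.Adj p.2 q.2, fun h => ⟨G.symm h.1, H.symm h.2⟩⟩

/-- The exponential graph `K_m^G`: vertices are all set maps `V(G) → [m]`,
and `f` is adjacent to `g` iff `f u ≠ g v` for every edge `(u,v)` of `G`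
(loops are allowed). -/
def expG (G : Graph' α) (m : ℕ) : Graph' (α → Fin m) :=
  ⟨fun f g => ∀ u v, G.Adj u v → f u ≠ g v,
   fun {f g} h u v huv e => h v u (G.symm huv) e.symm⟩

/-- `G` is connected: nonempty and any two vertices are joined by a walk. -/
def Connected (G : Graph' α) : Prop :=
  Nonempty α ∧ ∀ u v : α, Relation.ReflTransGen G.Adj u v

/-- Property `P` of the paper: `G` is simple, and for any two disjoint edges
`(v1,w1)` and `(v2,w2)`, if `(v2,v1)` is an edge then `(w2,v1)` or `(w2,w1)`
is an edge. -/
def PropertyP (G : Graph' α) : Prop :=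
  (∀ v, ¬ G.Adj v v) ∧
  ∀ ⦃v1 w1 v2 w2 : α⦄, G.Adj v1 w1 → G.Adj v2 w2 →
    v1 ≠ v2 → v1 ≠ w2 → w1 ≠ v2 → w1 ≠ w2 →
    G.Adj v2 v1 → (G.Adj w2 v1 ∨ G.Adj w2 w1)

/-- Base (unsymmetrized) relation for the Mycielskian:
level-0 copies are adjacent as in `G`, a level-1 vertex is adjacent to the
level-0 copies of the neighbours of its shadow, and the apex `none` is
adjacent to all level-1 vertices. -/
def mycRel (G : Graph' α) : Option (α × Bool) → Option (α × Bool) → Prop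
  | some (a, false), some (b, false) => G.Adj a b
  | some (a, true), some (b, false) => G.Adj a b
  | none, some (_, true) => True
  | _, _ => False

/-- The Mycielskian `M(G)`. -/
def myc (G : Graph' α) : Graph' (Option (α × Bool)) :=
  ⟨fun u v => G.mycRel u v ∨ G.mycRel v u, fun h => h.symm⟩

/-- The double Mycielskian `M(M(K_n))`. -/
def MMK (n : ℕ) : Graph' (Option (Option (Fin n × Bool) × Bool)) :=
  myc (myc (completeG n))

/-- The vertex `(x, i, j)` of `M(M(K_n))`. -/
def vtx {n : ℕ} (x : Fin n) (i j : Bool) : Option (Option (Fin n × Bool) × Bool) :=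
  some (some (x, i), j)

/-- The vertex `w_i = (*, i)` of `M(M(K_n))` for `i ∈ {0,1}`. -/
def wv (n : ℕ) (i : Bool) : Option (Option (Fin n × Bool) × Bool) :=
  some (none, i)

/-- The apex vertex `w_2` of `M(M(K_n))`. -/
def w2 (n : ℕ) : Option (Option (Fin n × Bool) × Bool) := none

end Graph'

/-! In `K_n` the neighbourhood of any vertex lies in the union of the neighbourhoods of two
distinct vertices `i0, i1`, and taking the Mycielskian preserves this at every vertex `(a, i)`.
So every neighbour of `(j, p, q)` in `M(M(K_n))` is a neighbour of `(i0, p, q)` or of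
`(i1, p, q)`, where `f` takes the value `f (i0, p, q)`; any `g` adjacent to `f` therefore avoids
that value at such a neighbour, and stays adjacent after `f` is recoloured. -/

namespace Graph'

variable {α : Type}

theorem adj_comm (G : Graph' α) {u v : α} : G.Adj u v ↔ G.Adj v u :=
  ⟨G.symm, G.symm⟩

theorem expG_neighborSet_subset {G : Graph' α} {m : ℕ} {f ft : α → Fin m}
    (h : ∀ u v, G.Adj u v → ∃ u', G.Adj u' v ∧ ft u = f u') :
    (expG G m).neighborSet f ⊆ (expG G m).neighborSet ft := by
  intro g hg u v huv
  obtain ⟨u', hu'v, hu⟩ := h u v huv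
  rw [hu]
  exact hg u' v hu'v

theorem completeG_neighborSet_subset_union {n : ℕ} {i0 i1 : Fin n} (hi : i0 ≠ i1) (j : Fin n) :
    (completeG n).neighborSet j ⊆ (completeG n).neighborSet i0 ∪ (completeG n).neighborSet i1 := by
  intro k _
  by_cases hk : k = i0
  · exact Or.inr (hk ▸ hi.symm : i1 ≠ k)
  · exact Or.inl (Ne.symm hk)

theorem myc_neighborSet_subset_union {G : Graph' α} {a b c : α}
    (h : G.neighborSet a ⊆ G.neighborSet b ∪ G.neighborSet c) (i : Bool) :
    (myc G).neighborSet (some (a, i)) ⊆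
      (myc G).neighborSet (some (b, i)) ∪ (myc G).neighborSet (some (c, i)) := by
  rintro (_ | ⟨x, k⟩) hx
  · cases i <;> simp_all [myc, mycRel, neighborSet]
  · have hax := @h x
    cases i <;> cases k <;> simp_all [myc, mycRel, neighborSet, G.adj_comm (u := x)]

theorem MMK_neighborSet_subset_union {n : ℕ} {i0 i1 : Fin n} (hi : i0 ≠ i1) (j : Fin n)
    (p q : Bool) :
    (MMK n).neighborSet (vtx j p q) ⊆
      (MMK n).neighborSet (vtx i0 p q) ∪ (MMK n).neighborSet (vtx i1 p q) :=
  myc_neighborSet_subset_union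
    (myc_neighborSet_subset_union (completeG_neighborSet_subset_union hi j) p) q

end Graph'


namespace Graph

open Graph'

theorem exists_dominating_MMK (n m : ℕ)
    (f : Option (Option (Fin n × Bool) × Bool) → Fin m)
    (p q : Bool) (i0 i1 : Fin n) (hi : i0 ≠ i1)
    (hf : f (vtx i0 p q) = f (vtx i1 p q)) :
    ∃ ft : Option (Option (Fin n × Bool) × Bool) → Fin m,
      (∀ j : Fin n, ft (vtx j p q) = f (vtx i0 p q)) ∧
      (∀ x, (∀ j : Fin n, x ≠ vtx j p q) → ft x = f x) ∧
      (expG (MMK n) m).neighborSet f ⊆ (expG (MMK n) m).neighborSet ft := by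
  refine ⟨fun x => if ∃ j, x = vtx j p q then f (vtx i0 p q) else f x,
    fun j => if_pos ⟨j, rfl⟩, fun x hx => if_neg (not_exists.mpr hx),
    expG_neighborSet_subset fun u v huv => ?_⟩
  by_cases hu : ∃ j, u = vtx j p q
  · obtain ⟨j, rfl⟩ := hu
    rcases MMK_neighborSet_subset_union hi j p q huv with h0 | h1
    · exact ⟨_, h0, if_pos ⟨j, rfl⟩⟩
    · exact ⟨_, h1, (if_pos ⟨j, rfl⟩).trans hf⟩
  · exact ⟨u, huv, if_neg hu⟩

end Graph
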